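/- arXiv:2103.09611 — 4 statements merged into one kernel-verified Lean document; each statement's English description precedes it below -/
import Mathlib

section
/- Borel Lemma: Let φ be a monotone nondecreasing real-valued function on [0,∞) such that φ(r₀) > 1 for some r₀ ≥ 0. Then for every δ > 0 there exists a measurable set E_δ ⊆ [0,∞) of finite Lebesgue measure such that for every r ∈ [0,∞) \ E_δ at which φ is differentiable, one has φ'(r) ≤ φ(r)·(log φ(r))^{1+δ}. -/
/-!
Compose `φ` with `g(t) = -(log t)^(-δ)/δ`, a primitive of `t ↦ (t (log t)^(1+δ))⁻¹` on
`(1, ∞)`. Since `δ > 0`, `g` is increasing and bounded there, so `Ψ = g ∘ φ` (frozen below `r₀`)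
is a bounded monotone function. Where the inequality fails, `Ψ' = φ' / (φ (log φ)^(1+δ)) > 1`,
and a bounded monotone function can have derivative `≥ 1` only on a set of measure at most its
oscillation, because `Ψ'` is the density of the absolutely continuous part of its Stieltjes
measure.
-/

open MeasureTheory Set Topology

lemma StieltjesFunction.measure_univ_le_of_mem_Icc {R : Type*} [LinearOrder R]
    [TopologicalSpace R] [OrderTopology R] [CompactIccSpace R] [MeasurableSpace R] [BorelSpace R]
    [SecondCountableTopology R] [DenselyOrdered R] [Nonempty R]
    (f : StieltjesFunction R) {a b : ℝ} (hf : ∀ x, f x ∈ Icc a b) :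
    f.measure univ ≤ ENNReal.ofReal (b - a) := by
  have hbot : BddBelow (range f) := ⟨a, forall_mem_range.2 fun x => (hf x).1⟩
  have htop : BddAbove (range f) := ⟨b, forall_mem_range.2 fun x => (hf x).2⟩
  rw [f.measure_univ (tendsto_atBot_ciInf f.mono hbot) (tendsto_atTop_ciSup f.mono htop)]
  exact ENNReal.ofReal_le_ofReal
    (sub_le_sub (ciSup_le fun x => (hf x).2) (le_ciInf fun x => (hf x).1))

theorem Monotone.ofReal_mul_volume_setOf_le_deriv_le {f : ℝ → ℝ} (hf : Monotone f) {a b : ℝ}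
    (hab : ∀ x, f x ∈ Icc a b) (c : ℝ) :
    ENNReal.ofReal c * volume {x | c ≤ deriv f x} ≤ ENNReal.ofReal (b - a) := by
  set ν := hf.stieltjesFunction.measure
  have hS : MeasurableSet {x | c ≤ deriv f x} :=
    measurableSet_le measurable_const (measurable_deriv f)
  have hν : ∀ x, hf.stieltjesFunction x ∈ Icc a b := fun x => by
    rw [hf.stieltjesFunction_eq]
    exact ⟨(hab x).1.trans (hf.le_rightLim le_rfl),
      (hf.rightLim_le (lt_add_one x)).trans (hab _).2⟩
  calc ENNReal.ofReal c * volume {x | c ≤ deriv f x}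
      = ∫⁻ _ in {x | c ≤ deriv f x}, ENNReal.ofReal c := (setLIntegral_const _ _).symm
    _ ≤ ∫⁻ x in {x | c ≤ deriv f x}, ν.rnDeriv volume x := by
        refine lintegral_mono_ae ((ae_restrict_iff' hS).2 ?_)
        filter_upwards [hf.ae_hasDerivAt] with x hx hxc
        rw [hx.deriv] at hxc
        exact (ENNReal.ofReal_le_ofReal hxc).trans ENNReal.ofReal_toReal_le
    _ ≤ ν {x | c ≤ deriv f x} := Measure.setLIntegral_rnDeriv_le _
    _ ≤ ν univ := measure_mono (subset_univ _)
    _ ≤ ENNReal.ofReal (b - a) := hf.stieltjesFunction.measure_univ_le_of_mem_Icc hν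

lemma mul_log_rpow_pos {t : ℝ} (ht : 1 < t) (p : ℝ) : 0 < t * Real.log t ^ p :=
  mul_pos (by linarith) (Real.rpow_pos_of_pos (Real.log_pos ht) p)

lemma MonotoneOn.monotone_comp_max_const {α β : Type*} [LinearOrder α] [Preorder β]
    {f : α → β} {a : α} (hf : MonotoneOn f (Ici a)) : Monotone fun x => f (max x a) :=
  fun x y hxy => hf (le_max_right x a) (le_max_right y a) (max_le_max_right a hxy)

noncomputable def borelPrimitive (δ t : ℝ) : ℝ := -(Real.log t ^ (-δ)) / δ

lemma hasDerivAt_borelPrimitive {δ t : ℝ} (hδ : δ ≠ 0) (ht : 1 < t) :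
    HasDerivAt (borelPrimitive δ) (t * Real.log t ^ (1 + δ))⁻¹ t := by
  have hlog : 0 < Real.log t := Real.log_pos ht
  have h : HasDerivAt (fun t => -(Real.log t ^ (-δ)) / δ) _ t :=
    (((Real.hasDerivAt_log (by linarith)).rpow_const (Or.inl hlog.ne')).neg).div_const δ
  refine h.congr_deriv ?_
  rw [show -δ - 1 = -(1 + δ) by ring, Real.rpow_neg hlog.le]
  field_simp

lemma borelPrimitive_strictMonoOn {δ : ℝ} (hδ : δ ≠ 0) :
    StrictMonoOn (borelPrimitive δ) (Ioi 1) := by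
  refine strictMonoOn_of_deriv_pos (convex_Ioi 1)
    (fun t ht => (hasDerivAt_borelPrimitive hδ ht).continuousAt.continuousWithinAt) ?_
  rw [interior_Ioi]
  intro t ht
  rw [(hasDerivAt_borelPrimitive hδ ht).deriv]
  exact inv_pos.2 (mul_log_rpow_pos ht _)

lemma borelPrimitive_mem_Icc {δ c t : ℝ} (hδ : 0 < δ) (hc : 1 < c) (hct : c ≤ t) :
    borelPrimitive δ t ∈ Icc (borelPrimitive δ c) 0 :=
  ⟨(borelPrimitive_strictMonoOn hδ.ne').monotoneOn hc (hc.trans_le hct) hct,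
    div_nonpos_of_nonpos_of_nonneg
      (neg_nonpos.2 (Real.rpow_nonneg (Real.log_nonneg (hc.trans_le hct).le) _)) hδ.le⟩

lemma deriv_borelPrimitive_comp_lt_one_iff {φ : ℝ → ℝ} {δ r : ℝ} (hδ : δ ≠ 0)
    (h1 : 1 < φ r) (hφ : DifferentiableAt ℝ φ r) :
    deriv (borelPrimitive δ ∘ φ) r < 1 ↔ deriv φ r < φ r * Real.log (φ r) ^ (1 + δ) := by
  rw [((hasDerivAt_borelPrimitive hδ h1).comp r hφ.hasDerivAt).deriv,
    inv_mul_lt_iff₀ (mul_log_rpow_pos h1 _), mul_one]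

/-- **Borel Lemma.** If `φ` is monotone nondecreasing on `[0,∞)` with `φ r₀ > 1` for some
`r₀ ≥ 0`, then for every `δ > 0` there is a measurable set `E_δ ⊆ [0,∞)` of finite Lebesgue
measure such that `φ'(r) ≤ φ(r) * (log φ(r))^(1+δ)` for every `r ∈ [0,∞) \ E_δ` at which `φ`
is differentiable. -/
theorem borel_lemma (φ : ℝ → ℝ) (hφ : MonotoneOn φ (Ici (0 : ℝ)))
    (r₀ : ℝ) (hr₀ : 0 ≤ r₀) (hφr₀ : 1 < φ r₀) (δ : ℝ) (hδ : 0 < δ) :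
    ∃ E : Set ℝ, E ⊆ Ici (0 : ℝ) ∧ MeasurableSet E ∧ volume E < ⊤ ∧
      ∀ r ∈ Ici (0 : ℝ) \ E, DifferentiableAt ℝ φ r →
        deriv φ r ≤ φ r * Real.log (φ r) ^ (1 + δ) := by
  set ψ : ℝ → ℝ := fun r => φ (max r r₀)
  have hψ_ge : ∀ r, φ r₀ ≤ ψ r := fun r =>
    hφ hr₀ (hr₀.trans (le_max_right r r₀)) (le_max_right r r₀)
  have hψ_mono : Monotone ψ := (hφ.mono (Ici_subset_Ici.2 hr₀)).monotone_comp_max_const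
  have hΨ_mono : Monotone (borelPrimitive δ ∘ ψ) := fun r s hrs =>
    (borelPrimitive_strictMonoOn hδ.ne').monotoneOn (hφr₀.trans_le (hψ_ge r))
      (hφr₀.trans_le (hψ_ge s)) (hψ_mono hrs)
  have hΨ_bad : volume {r | 1 ≤ deriv (borelPrimitive δ ∘ ψ) r} < ⊤ := by
    have h := hΨ_mono.ofReal_mul_volume_setOf_le_deriv_le
      (fun r => borelPrimitive_mem_Icc hδ hφr₀ (hψ_ge r)) 1
    rw [ENNReal.ofReal_one, one_mul] at h
    exact h.trans_lt ENNReal.ofReal_lt_top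
  refine ⟨Icc 0 r₀ ∪ Ici 0 ∩ {r | 1 ≤ deriv (borelPrimitive δ ∘ ψ) r},
    union_subset Icc_subset_Ici_self inter_subset_left,
    measurableSet_Icc.union (measurableSet_Ici.inter
      (measurableSet_le measurable_const (measurable_deriv _))),
    measure_union_lt_top (by simp) ((measure_mono inter_subset_right).trans_lt hΨ_bad), ?_⟩
  rintro r ⟨hr0, hrE⟩ hdiff
  simp only [mem_union, mem_Icc, mem_inter_iff, mem_ofPred_eq, not_or, not_and, not_le] at hrE
  have hr : r₀ < r := hrE.1 hr0
  have hψφ : ψ =ᶠ[𝓝 r] φ := by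
    filter_upwards [Ioi_mem_nhds hr] with s hs
    simp [ψ, max_eq_left (mem_Ioi.1 hs).le]
  have h1 : 1 < φ r := hφr₀.trans_le (hψ_ge r |>.trans_eq hψφ.eq_of_nhds)
  rw [(hψφ.fun_comp _).deriv_eq, deriv_borelPrimitive_comp_lt_one_iff hδ.ne' h1 hdiff] at hrE
  exact (hrE.2 hr0).le
end

section
/- Quantitative Borel Lemma: Let φ be a monotone nondecreasing real-valued function on [0,∞) with φ(r₀) > 1 for some r₀ ≥ 0, and let δ > 0. Then the set S = { r ∈ [r₀,∞) : φ is differentiable at r and φ'(r) > φ(r)·(log φ(r))^{1+δ} } has Lebesgue measure at most 1/(δ·(log φ(r₀))^δ); in particular its Lebesgue measure is finite. -/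
/-! The function `ψ = -(log φ)^(-δ) / δ` is nondecreasing on `[r₀, ∞)` with values in
`[-(log φ r₀)^(-δ) / δ, 0]`, and `ψ' = φ' / (φ (log φ)^(1+δ))`, so apart from `r₀` the set `S` is
contained in `{ψ' > 1}`. The derivative of a bounded monotone function is dominated by its
Stieltjes measure, whose total mass is the oscillation of the function; hence
`|S| ≤ (log φ r₀)^(-δ) / δ`. -/

open MeasureTheory Set Filter Topology

theorem StieltjesFunction.measure_univ_le {f : StieltjesFunction ℝ} {a b : ℝ}
    (ha : ∀ x, a ≤ f x) (hb : ∀ x, f x ≤ b) : f.measure univ ≤ ENNReal.ofReal (b - a) := by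
  rw [f.measure_univ (tendsto_atBot_ciInf f.mono ⟨a, forall_mem_range.2 ha⟩)
    (tendsto_atTop_ciSup f.mono ⟨b, forall_mem_range.2 hb⟩)]
  exact ENNReal.ofReal_le_ofReal (sub_le_sub (ciSup_le hb) (le_ciInf ha))

namespace Monotone

variable {f : ℝ → ℝ} {a b : ℝ}

theorem measure_stieltjesFunction_univ_le (hf : Monotone f) (ha : ∀ x, a ≤ f x)
    (hb : ∀ x, f x ≤ b) : hf.stieltjesFunction.measure univ ≤ ENNReal.ofReal (b - a) :=
  StieltjesFunction.measure_univ_le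
    (fun x => (ha x).trans (hf.stieltjesFunction_eq x ▸ hf.le_rightLim le_rfl))
    (fun x => (hf.stieltjesFunction_eq x ▸ hf.rightLim_le (lt_add_one x)).trans (hb (x + 1)))

theorem ofReal_mul_volume_setOf_le_deriv_le_s1 (hf : Monotone f) (ha : ∀ x, a ≤ f x)
    (hb : ∀ x, f x ≤ b) (c : ℝ) :
    ENNReal.ofReal c * volume {x | c ≤ deriv f x} ≤ ENNReal.ofReal (b - a) := by
  set μ := hf.stieltjesFunction.measure
  set A := {x | ENNReal.ofReal c ≤ μ.rnDeriv volume x}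
  have hA : {x | c ≤ deriv f x} ≤ᵐ[volume] A := by
    filter_upwards [hf.ae_hasDerivAt] with x hx hc
    change c ≤ deriv f x at hc
    rw [hx.deriv] at hc
    exact (ENNReal.ofReal_le_ofReal hc).trans ENNReal.ofReal_toReal_le
  calc ENNReal.ofReal c * volume {x | c ≤ deriv f x}
      ≤ ENNReal.ofReal c * volume A := mul_le_mul_right (measure_mono_ae hA) _
    _ = ∫⁻ _ in A, ENNReal.ofReal c := (setLIntegral_const A _).symm
    _ ≤ ∫⁻ x in A, μ.rnDeriv volume x :=
        setLIntegral_mono (μ.measurable_rnDeriv volume) fun _ hx => hx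
    _ ≤ ∫⁻ x, μ.rnDeriv volume x := setLIntegral_le_lintegral A _
    _ ≤ μ univ := Measure.lintegral_rnDeriv_le
    _ ≤ ENNReal.ofReal (b - a) := hf.measure_stieltjesFunction_univ_le ha hb

end Monotone

theorem HasDerivAt.neg_log_rpow_neg_div {φ : ℝ → ℝ} {φ' x δ : ℝ} (hφ : HasDerivAt φ φ' x)
    (hx : 1 < φ x) (hδ : δ ≠ 0) :
    HasDerivAt (fun y => -Real.log (φ y) ^ (-δ) / δ)
      (φ' / (φ x * Real.log (φ x) ^ (1 + δ))) x := by
  have hlog := Real.log_pos hx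
  refine (((hφ.log (by linarith)).rpow_const (Or.inl hlog.ne')).neg.div_const δ).congr_deriv ?_
  rw [show -δ - 1 = -(1 + δ) by ring, Real.rpow_neg hlog.le]
  field_simp

theorem one_lt_deriv_neg_log_rpow_neg_div {φ : ℝ → ℝ} {x δ : ℝ} (hφ : DifferentiableAt ℝ φ x)
    (hx : 1 < φ x) (hδ : δ ≠ 0) (h : φ x * Real.log (φ x) ^ (1 + δ) < deriv φ x) :
    1 < deriv (fun y => -Real.log (φ y) ^ (-δ) / δ) x := by
  rw [(hφ.hasDerivAt.neg_log_rpow_neg_div hx hδ).deriv,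
    one_lt_div (by have := Real.log_pos hx; positivity)]
  exact h

theorem Monotone.volume_setOf_one_lt_deriv_neg_rpow_neg_div_le {u : ℝ → ℝ} (hu : Monotone u)
    {L δ : ℝ} (hL : 0 < L) (huL : ∀ x, L ≤ u x) (hδ : 0 < δ) :
    volume {x | 1 < deriv (fun y => -u y ^ (-δ) / δ) x} ≤ ENNReal.ofReal (L ^ (-δ) / δ) := by
  have hmono : Monotone fun y => -u y ^ (-δ) / δ := fun x y hxy =>
    div_le_div_of_nonneg_right (neg_le_neg <| Real.rpow_le_rpow_of_nonpos (hL.trans_le (huL x))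
      (hu hxy) (by linarith)) hδ.le
  have hlower : ∀ x, -L ^ (-δ) / δ ≤ -u x ^ (-δ) / δ := fun x =>
    div_le_div_of_nonneg_right (neg_le_neg <| Real.rpow_le_rpow_of_nonpos hL (huL x)
      (by linarith)) hδ.le
  have hupper : ∀ x, -u x ^ (-δ) / δ ≤ 0 := fun x =>
    div_nonpos_of_nonpos_of_nonneg (neg_nonpos.2 (Real.rpow_nonneg (hL.le.trans (huL x)) _)) hδ.le
  calc volume {x | 1 < deriv (fun y => -u y ^ (-δ) / δ) x}
      ≤ ENNReal.ofReal 1 * volume {x | 1 ≤ deriv (fun y => -u y ^ (-δ) / δ) x} := by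
        rw [ENNReal.ofReal_one, one_mul]
        exact measure_mono (ofPred_subset_ofPred.2 fun _ => le_of_lt)
    _ ≤ ENNReal.ofReal (0 - -L ^ (-δ) / δ) :=
        hmono.ofReal_mul_volume_setOf_le_deriv_le_s1 hlower hupper 1
    _ = ENNReal.ofReal (L ^ (-δ) / δ) := by rw [zero_sub, neg_div, neg_neg]

/-- **Quantitative Borel Lemma.** If `φ` is monotone nondecreasing on `[0,∞)` with
`φ r₀ > 1` for some `r₀ ≥ 0` and `δ > 0`, then the set
`S = {r ∈ [r₀,∞) : φ differentiable at r and φ'(r) > φ(r) (log φ(r))^(1+δ)}`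
has Lebesgue measure at most `1/(δ (log φ(r₀))^δ)`; in particular it is finite. -/
theorem quantitative_borel_lemma (φ : ℝ → ℝ) (hφ : MonotoneOn φ (Ici (0 : ℝ)))
    (r₀ : ℝ) (hr₀ : 0 ≤ r₀) (hφr₀ : 1 < φ r₀) (δ : ℝ) (hδ : 0 < δ) :
    volume {r : ℝ | r ∈ Ici r₀ ∧ DifferentiableAt ℝ φ r ∧
        φ r * Real.log (φ r) ^ (1 + δ) < deriv φ r}
        ≤ ENNReal.ofReal (1 / (δ * Real.log (φ r₀) ^ δ)) ∧
      volume {r : ℝ | r ∈ Ici r₀ ∧ DifferentiableAt ℝ φ r ∧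
        φ r * Real.log (φ r) ^ (1 + δ) < deriv φ r} < ⊤ := by
  set S := {r : ℝ | r ∈ Ici r₀ ∧ DifferentiableAt ℝ φ r ∧
    φ r * Real.log (φ r) ^ (1 + δ) < deriv φ r}
  have hL : 0 < Real.log (φ r₀) := Real.log_pos hφr₀
  have hφ_max : Monotone fun r => φ (max r r₀) := fun a b hab =>
    hφ (hr₀.trans (le_max_right a r₀)) (hr₀.trans (le_max_right b r₀)) (max_le_max_right r₀ hab)
  have hφ_le : ∀ r, φ r₀ ≤ φ (max r r₀) := fun r => by simpa using hφ_max (le_max_right r r₀)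
  have hlog_mono : Monotone fun r => Real.log (φ (max r r₀)) := fun a b hab =>
    Real.log_le_log (by linarith [hφ_le a]) (hφ_max hab)
  have hS : S ⊆ {r₀} ∪ {x | 1 < deriv (fun y => -Real.log (φ (max y r₀)) ^ (-δ) / δ) x} := by
    rintro x ⟨hx, hdiff, hlt⟩
    obtain rfl | hx := (mem_Ici.1 hx).eq_or_lt
    · exact Or.inl rfl
    have heq : (fun y => φ (max y r₀)) =ᶠ[𝓝 x] φ :=
      eventually_of_mem (Ioi_mem_nhds hx) fun y hy => congrArg φ (max_eq_left (mem_Ioi.1 hy).le)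
    refine Or.inr (one_lt_deriv_neg_log_rpow_neg_div (hdiff.congr_of_eventuallyEq heq) ?_ hδ.ne' ?_)
    · simpa [max_eq_left hx.le] using hφr₀.trans_le (hφ_le x)
    · simpa only [heq.deriv_eq, max_eq_left hx.le] using hlt
  have hvol : volume S ≤ ENNReal.ofReal (1 / (δ * Real.log (φ r₀) ^ δ)) :=
    calc volume S
        ≤ volume {r₀} + volume {x | 1 < deriv (fun y => -Real.log (φ (max y r₀)) ^ (-δ) / δ) x} :=
          (measure_mono hS).trans (measure_union_le _ _)
      _ ≤ ENNReal.ofReal (Real.log (φ r₀) ^ (-δ) / δ) := by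
          rw [measure_singleton, zero_add]
          exact hlog_mono.volume_setOf_one_lt_deriv_neg_rpow_neg_div_le hL
            (fun r => Real.log_le_log (by linarith) (hφ_le r)) hδ
      _ = ENNReal.ofReal (1 / (δ * Real.log (φ r₀) ^ δ)) := by
          rw [Real.rpow_neg hL.le, one_div, mul_inv_rev, div_eq_mul_inv]
  exact ⟨hvol, hvol.trans_lt ENNReal.ofReal_lt_top⟩
end

section
/- Let r₀ ≥ 0, let φ : [r₀,∞) → ℝ be monotone nondecreasing with φ(r₀) > 1, and let δ > 0. Then the Lebesgue integral ∫_{r₀}^∞ φ'(r)/(φ(r)·(log φ(r))^{1+δ}) dr (where φ' is the almost-everywhere defined derivative of φ) is finite, and in fact is bounded above by 1/(δ·(log φ(r₀))^δ). -/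
/-!
With `G y = -(log y)^(-δ) / δ`, the integrand is `G'(φ r) φ'(r)`, which is `(G ∘ φ)'(r)` where
`φ` is differentiable and `0 ≤ (G ∘ φ)'(r)` elsewhere. The function `G ∘ φ` is monotone on
`[r₀, ∞)` and bounded above by `0`, and the integral of the derivative of a monotone function
over `[a, b]` is at most its increment; letting `b → ∞` bounds the integral by
`0 - G (φ r₀) = 1 / (δ (log φ(r₀))^δ)`.
-/

open MeasureTheory Set Filter Topology

lemma MonotoneOn.deriv_nonneg_of_mem_nhds {f : ℝ → ℝ} {s : Set ℝ} {x : ℝ}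
    (hf : MonotoneOn f s) (hs : s ∈ 𝓝 x) : 0 ≤ deriv f x :=
  derivWithin_of_mem_nhds (f := f) hs ▸ hf.derivWithin_nonneg

lemma MonotoneOn.setLIntegral_ofReal_deriv_Ioc_le {f : ℝ → ℝ} {a b : ℝ}
    (hf : MonotoneOn f (Icc a b)) :
    ∫⁻ x in Ioc a b, ENNReal.ofReal (deriv f x) ≤ ENNReal.ofReal (f b - f a) := by
  rcases lt_or_ge b a with hba | hab
  · simp [Ioc_eq_empty_of_le hba.le]
  have hf' : MonotoneOn f (uIcc a b) := uIcc_of_le hab ▸ hf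
  have hfab : 0 ≤ f b - f a := sub_nonneg.2 (hf (by simp [hab]) (by simp [hab]) hab)
  have hnonneg : 0 ≤ᵐ[volume.restrict (Ioc a b)] deriv f := by
    rw [← Measure.restrict_congr_set Ioo_ae_eq_Ioc]
    exact ae_restrict_of_forall_mem measurableSet_Ioo fun x hx ↦
      hf.deriv_nonneg_of_mem_nhds (Icc_mem_nhds hx.1 hx.2)
  rw [← ofReal_integral_eq_lintegral_ofReal hf'.intervalIntegrable_deriv.1 hnonneg,
    ← intervalIntegral.integral_of_le hab]
  exact ENNReal.ofReal_le_ofReal (uIcc_of_le hfab ▸ hf'.intervalIntegral_deriv_mem_uIcc).2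

lemma MonotoneOn.setLIntegral_ofReal_deriv_Ioi_le {f : ℝ → ℝ} {a M : ℝ}
    (hf : MonotoneOn f (Ici a)) (hM : ∀ x ∈ Ici a, f x ≤ M) :
    ∫⁻ x in Ioi a, ENNReal.ofReal (deriv f x) ≤ ENNReal.ofReal (M - f a) := by
  have hcover : AECover (volume.restrict (Ioi a)) atTop fun b : ℝ ↦ Iic b :=
    aecover_Iic tendsto_id
  have hlim := hcover.lintegral_tendsto_of_countably_generated
    (measurable_deriv f).ennreal_ofReal.aemeasurable
  refine le_of_tendsto hlim (eventually_ge_atTop a |>.mono fun b hab ↦ ?_)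
  rw [Measure.restrict_restrict measurableSet_Iic, Iic_inter_Ioi]
  calc ∫⁻ x in Ioc a b, ENNReal.ofReal (deriv f x)
      ≤ ENNReal.ofReal (f b - f a) :=
        (hf.mono Icc_subset_Ici_self).setLIntegral_ofReal_deriv_Ioc_le
    _ ≤ ENNReal.ofReal (M - f a) := ENNReal.ofReal_le_ofReal (by linarith [hM b hab])

/-- Where `f` is not differentiable, `deriv f x = 0`, so the chain rule survives as an
inequality as soon as `deriv (g ∘ f) x` is known to be nonnegative. -/
lemma mul_deriv_le_deriv_comp {f g : ℝ → ℝ} {x g' : ℝ} (hg : HasDerivAt g g' (f x))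
    (hgf : 0 ≤ deriv (g ∘ f) x) : g' * deriv f x ≤ deriv (g ∘ f) x := by
  by_cases hf : DifferentiableAt ℝ f x
  · exact (hg.comp x hf.hasDerivAt).deriv.ge
  · simpa [deriv_zero_of_not_differentiableAt hf] using hgf

lemma Real.hasDerivAt_neg_rpow_neg_log_div {δ x : ℝ} (hδ : δ ≠ 0) (hx : 1 < x) :
    HasDerivAt (fun y ↦ -(Real.log y ^ (-δ) / δ)) (x * Real.log x ^ (1 + δ))⁻¹ x := by
  have hlog : 0 < Real.log x := Real.log_pos hx
  have hrpow := (Real.hasDerivAt_rpow_const (p := -δ) (Or.inl hlog.ne')).comp x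
    (Real.hasDerivAt_log (by linarith))
  refine (hrpow.div_const δ).neg.congr_deriv ?_
  rw [show -δ - 1 = -(1 + δ) by ring, Real.rpow_neg hlog.le]
  field_simp

lemma Real.monotoneOn_neg_rpow_neg_log_div {δ : ℝ} (hδ : 0 < δ) :
    MonotoneOn (fun y ↦ -(Real.log y ^ (-δ) / δ)) (Ioi 1) := by
  intro x hx y _ hxy
  have hlog : 0 < Real.log x := Real.log_pos hx
  have := Real.rpow_le_rpow_of_nonpos hlog (Real.log_le_log (by linarith [mem_Ioi.1 hx]) hxy)
    (neg_nonpos.2 hδ.le)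
  dsimp only
  gcongr

theorem integral_deriv_div_finite_general (r₀ : ℝ) (φ : ℝ → ℝ)
    (hφ : MonotoneOn φ (Ici r₀)) (hφr₀ : 1 < φ r₀) (δ : ℝ) (hδ : 0 < δ) :
    (∫⁻ r in Ici r₀,
        ENNReal.ofReal (deriv φ r / (φ r * Real.log (φ r) ^ (1 + δ)))) ≠ ⊤ ∧
      (∫⁻ r in Ici r₀,
        ENNReal.ofReal (deriv φ r / (φ r * Real.log (φ r) ^ (1 + δ))))
        ≤ ENNReal.ofReal (1 / (δ * Real.log (φ r₀) ^ δ)) := by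
  set G : ℝ → ℝ := fun y ↦ -(Real.log y ^ (-δ) / δ)
  have hφ_gt : ∀ r ∈ Ici r₀, 1 < φ r := fun r hr ↦ hφr₀.trans_le (hφ self_mem_Ici hr hr)
  have hF : MonotoneOn (G ∘ φ) (Ici r₀) :=
    (Real.monotoneOn_neg_rpow_neg_log_div hδ).comp hφ hφ_gt
  have hF_nonpos : ∀ r ∈ Ici r₀, (G ∘ φ) r ≤ 0 := fun r hr ↦
    neg_nonpos.2 (div_nonneg (Real.rpow_nonneg (Real.log_pos (hφ_gt r hr)).le _) hδ.le)
  have hF_r₀ : 0 - (G ∘ φ) r₀ = 1 / (δ * Real.log (φ r₀) ^ δ) := by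
    simp [G, Real.rpow_neg (Real.log_pos hφr₀).le, div_eq_inv_mul, mul_comm]
  have hbound : ∀ r ∈ Ioi r₀, ENNReal.ofReal (deriv φ r / (φ r * Real.log (φ r) ^ (1 + δ)))
      ≤ ENNReal.ofReal (deriv (G ∘ φ) r) := fun r hr ↦ by
    rw [div_eq_inv_mul]
    exact ENNReal.ofReal_le_ofReal <| mul_deriv_le_deriv_comp
      (Real.hasDerivAt_neg_rpow_neg_log_div hδ.ne' (hφ_gt r (Ioi_subset_Ici_self hr)))
      (hF.deriv_nonneg_of_mem_nhds (Ici_mem_nhds hr))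
  have hle := calc
    ∫⁻ r in Ici r₀, ENNReal.ofReal (deriv φ r / (φ r * Real.log (φ r) ^ (1 + δ)))
      = ∫⁻ r in Ioi r₀, ENNReal.ofReal (deriv φ r / (φ r * Real.log (φ r) ^ (1 + δ))) :=
        setLIntegral_congr Ioi_ae_eq_Ici.symm
    _ ≤ ∫⁻ r in Ioi r₀, ENNReal.ofReal (deriv (G ∘ φ) r) :=
        setLIntegral_mono' measurableSet_Ioi hbound
    _ ≤ ENNReal.ofReal (0 - (G ∘ φ) r₀) := hF.setLIntegral_ofReal_deriv_Ioi_le hF_nonpos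
    _ = ENNReal.ofReal (1 / (δ * Real.log (φ r₀) ^ δ)) := by rw [hF_r₀]
  exact ⟨ne_top_of_le_ne_top ENNReal.ofReal_ne_top hle, hle⟩

/-- If `φ : [r₀,∞) → ℝ` is monotone nondecreasing with `φ r₀ > 1` and `δ > 0`, then the
Lebesgue integral `∫_{r₀}^∞ φ'(r) / (φ(r) (log φ(r))^(1+δ)) dr` (with `φ'` the a.e.-defined
derivative of `φ`) is finite, and in fact bounded above by `1/(δ (log φ(r₀))^δ)`. -/
theorem integral_deriv_div_finite (r₀ : ℝ) (hr₀ : 0 ≤ r₀) (φ : ℝ → ℝ)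
    (hφ : MonotoneOn φ (Ici r₀)) (hφr₀ : 1 < φ r₀) (δ : ℝ) (hδ : 0 < δ) :
    (∫⁻ r in Ici r₀,
        ENNReal.ofReal (deriv φ r / (φ r * Real.log (φ r) ^ (1 + δ)))) ≠ ⊤ ∧
      (∫⁻ r in Ici r₀,
        ENNReal.ofReal (deriv φ r / (φ r * Real.log (φ r) ^ (1 + δ))))
        ≤ ENNReal.ofReal (1 / (δ * Real.log (φ r₀) ^ δ)) :=
  integral_deriv_div_finite_general r₀ φ hφ hφr₀ δ hδ
end

section
/- Let m ≥ 1 and let T : [1,∞) → ℝ be a nondecreasing differentiable function with T(r₀) > 1 for some r₀ ≥ 1. Suppose the function S(r) := r^{2m-1}·T'(r) is nondecreasing and differentiable on [1,∞) with S(r₁) > 1 for some r₁ ≥ 1. Then there exist a constant C > 0 and a measurable set E ⊆ [1,∞) of finite Lebesgue measure such that for all r ∈ [1,∞) \ E, log⁺( r^{-(2m-1)}·S'(r) ) ≤ C·( log⁺ T(r) + log⁺ log r + 1 ). -/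
open MeasureTheory Set Real Topology

/-! Borel's argument: if `g` is nondecreasing and bounded above by `M` on `[a, ∞)`, then
`{g' ≥ 1}` has measure at most `∫ g' ≤ M - g a`. Applied to `-1/T` and `-1/log S`, it shows that
`T' ≤ T²` and `S' ≤ S log² S` off a set of finite measure. There
`r^{-(2m-1)} S' ≤ T' log² S ≤ T² log² S`, while `log S = (2m-1) log r + log T' ≤ (2m+1) T log r`
as soon as `r ≥ e`, and taking `log⁺` gives the bound. -/

theorem MonotoneOn.deriv_nonneg {g : ℝ → ℝ} {s : Set ℝ} {x : ℝ} (hg : MonotoneOn g s)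
    (hs : s ∈ 𝓝 x) : 0 ≤ deriv g x :=
  (derivWithin_of_mem_nhds hs).symm.trans_ge hg.derivWithin_nonneg

theorem MonotoneOn.volume_inter_Ioo_le {g : ℝ → ℝ} {a b : ℝ} (hg : MonotoneOn g (Icc a b))
    (A : Set ℝ) (hA : ∀ x ∈ A, 1 ≤ deriv g x) :
    volume (A ∩ Ioo a b) ≤ ENNReal.ofReal (g b - g a) := by
  rcases le_or_gt b a with hba | hab
  · simp [Ioo_eq_empty_of_le hba]
  have hg' : MonotoneOn g (uIcc a b) := by rwa [uIcc_of_le hab.le]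
  have hnonneg : ∀ x ∈ Ioo a b, 0 ≤ deriv g x := fun x hx =>
    hg.deriv_nonneg (Icc_mem_nhds hx.1 hx.2)
  calc volume (A ∩ Ioo a b) = ∫⁻ _ in A ∩ Ioo a b, 1 := (setLIntegral_one _).symm
    _ ≤ ∫⁻ x in A ∩ Ioo a b, ENNReal.ofReal (deriv g x) :=
        setLIntegral_mono (measurable_deriv g).ennreal_ofReal fun x hx => by simpa using hA x hx.1
    _ ≤ ∫⁻ x in Ioo a b, ENNReal.ofReal (deriv g x) := lintegral_mono_set inter_subset_right
    _ = ENNReal.ofReal (∫ x in a..b, deriv g x) := by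
        rw [intervalIntegral.integral_of_le hab.le, integral_Ioc_eq_integral_Ioo,
          ofReal_integral_eq_lintegral_ofReal
            (hg'.intervalIntegrable_deriv.1.mono_set Ioo_subset_Ioc_self)
            ((ae_restrict_iff' measurableSet_Ioo).2 (.of_forall hnonneg))]
    _ ≤ ENNReal.ofReal (g b - g a) := by
        gcongr
        have hgab := hg (left_mem_Icc.2 hab.le) (right_mem_Icc.2 hab.le) hab.le
        exact (uIcc_of_le (sub_nonneg.2 hgab) ▸ hg'.intervalIntegral_deriv_mem_uIcc).2

theorem MonotoneOn.volume_setOf_one_le_deriv_lt_top {g : ℝ → ℝ} {a M : ℝ}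
    (hg : MonotoneOn g (Ici a)) (hM : ∀ x ∈ Ici a, g x ≤ M) :
    volume ({x | 1 ≤ deriv g x} ∩ Ioi a) < ⊤ := by
  have hcover : {x | 1 ≤ deriv g x} ∩ Ioi a = ⋃ n : ℕ, {x | 1 ≤ deriv g x} ∩ Ioo a (a + n) := by
    ext x
    simp only [mem_inter_iff, mem_iUnion, mem_Ioi, mem_Ioo]
    constructor
    · rintro ⟨hx, hax⟩
      obtain ⟨n, hn⟩ := exists_nat_gt (x - a)
      exact ⟨n, hx, hax, by linarith⟩
    · rintro ⟨n, hx, hax, -⟩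
      exact ⟨hx, hax⟩
  have hmono : Monotone fun n : ℕ => {x | 1 ≤ deriv g x} ∩ Ioo a (a + n) := fun m n hmn =>
    inter_subset_inter_right _ (Ioo_subset_Ioo_right (by gcongr))
  rw [hcover, hmono.measure_iUnion]
  refine lt_of_le_of_lt (iSup_le fun n => ?_) (ENNReal.ofReal_lt_top (r := M - g a))
  refine ((hg.mono Icc_subset_Ici_self).volume_inter_Ioo_le _ fun x hx => hx).trans ?_
  gcongr
  exact hM _ (mem_Ici.2 (le_add_of_nonneg_right n.cast_nonneg))

theorem MonotoneOn.neg_inv {f : ℝ → ℝ} {s : Set ℝ} (hf : MonotoneOn f s)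
    (hpos : ∀ x ∈ s, 0 < f x) : MonotoneOn (fun x => -(f x)⁻¹) s := fun x hx _ hy hxy =>
  neg_le_neg (inv_anti₀ (hpos x hx) (hf hx hy hxy))

theorem MonotoneOn.volume_setOf_one_le_deriv_neg_inv_lt_top {f : ℝ → ℝ} {a : ℝ}
    (hf : MonotoneOn f (Ici a)) (hpos : ∀ x ∈ Ici a, 0 < f x) :
    volume ({x | 1 ≤ deriv (fun y => -(f y)⁻¹) x} ∩ Ioi a) < ⊤ :=
  (hf.neg_inv hpos).volume_setOf_one_le_deriv_lt_top (M := 0) fun x hx =>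
    neg_nonpos.2 (inv_nonneg.2 (hpos x hx).le)

theorem deriv_le_sq_of_deriv_neg_inv_lt_one {f : ℝ → ℝ} {x : ℝ} (hfx : 0 < f x)
    (h : deriv (fun y => -(f y)⁻¹) x < 1) : deriv f x ≤ f x ^ 2 := by
  by_contra! hlt
  have hsq : 0 < f x ^ 2 := by positivity
  have hdiff : DifferentiableAt ℝ f x := differentiableAt_of_deriv_ne_zero (hsq.trans hlt).ne'
  have hderiv : HasDerivAt (fun y => -(f y)⁻¹) (deriv f x / f x ^ 2) x := by
    have := (hdiff.hasDerivAt.inv hfx.ne').neg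
    rwa [neg_div, neg_neg] at this
  rw [hderiv.deriv] at h
  exact h.not_ge ((one_le_div hsq).2 hlt.le)

theorem deriv_le_mul_log_sq_of_deriv_neg_inv_log_lt_one {f : ℝ → ℝ} {x : ℝ} (hfx : 1 < f x)
    (h : deriv (fun y => -(log (f y))⁻¹) x < 1) : deriv f x ≤ f x * log (f x) ^ 2 := by
  have hf0 : 0 < f x := one_pos.trans hfx
  by_cases hdiff : DifferentiableAt ℝ f x
  · have := deriv_le_sq_of_deriv_neg_inv_lt_one (f := fun y => log (f y)) (log_pos hfx) h
    rwa [(hdiff.hasDerivAt.log hf0.ne').deriv, div_le_iff₀' hf0] at this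
  · rw [deriv_zero_of_not_differentiableAt hdiff]
    positivity

theorem log_pow_mul_le {k : ℕ} {r t d : ℝ} (hr : exp 1 ≤ r) (ht : 1 ≤ t) (hd : 0 < d)
    (hdt : d ≤ t ^ 2) : log (r ^ k * d) ≤ (k + 2) * t * log r := by
  have hr0 : 0 < r := (exp_pos 1).trans_le hr
  have hlogr : 1 ≤ log r := by simpa using log_le_log (exp_pos 1) hr
  have hlogd : log d ≤ 2 * log t := by
    simpa using log_le_log hd hdt
  have hlogt : log t ≤ t := (log_le_sub_one_of_pos (by linarith)).trans (by linarith)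
  rw [log_mul (pow_pos hr0 k).ne' hd.ne', log_pow]
  have hk : (0 : ℝ) ≤ k := k.cast_nonneg
  nlinarith [mul_le_mul_of_nonneg_left ht (mul_nonneg hk (by linarith : (0:ℝ) ≤ log r))]

theorem posLog_inv_pow_mul_le {k : ℕ} {r t d ds : ℝ} (hr : exp 1 ≤ r) (ht : 1 ≤ t)
    (hdt : d ≤ t ^ 2) (hs : 1 < r ^ k * d) (hds₀ : 0 ≤ ds)
    (hds : ds ≤ r ^ k * d * log (r ^ k * d) ^ 2) :
    log⁺ ((r ^ k)⁻¹ * ds) ≤ (2 * k + 4) * (log⁺ t + log⁺ (log r) + 1) := by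
  set s := r ^ k * d
  have hρ : 0 < r ^ k := pow_pos ((exp_pos 1).trans_le hr) k
  have hd : 0 < d := pos_of_mul_pos_right (one_pos.trans hs) hρ.le
  have hds' : (r ^ k)⁻¹ * ds ≤ t ^ 2 * log s ^ 2 := calc
    (r ^ k)⁻¹ * ds ≤ (r ^ k)⁻¹ * (s * log s ^ 2) := by gcongr
    _ = d * log s ^ 2 := by simp only [s]; field_simp
    _ ≤ t ^ 2 * log s ^ 2 := by gcongr
  have hk : log⁺ ((k : ℝ) + 2) ≤ k + 1 :=
    max_le (by positivity) ((log_le_sub_one_of_pos (by positivity)).trans (by linarith))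
  have hlogs : log⁺ (log s) ≤ log⁺ ((k : ℝ) + 2) + log⁺ t + log⁺ (log r) := calc
    log⁺ (log s) ≤ log⁺ ((k + 2) * t * log r) :=
      posLog_le_posLog (log_nonneg hs.le) (log_pow_mul_le hr ht hd hdt)
    _ ≤ log⁺ ((k : ℝ) + 2) + log⁺ t + log⁺ (log r) :=
      posLog_mul.trans (by linarith [posLog_mul (x := (k : ℝ) + 2) (y := t)])
  calc log⁺ ((r ^ k)⁻¹ * ds) ≤ log⁺ (t ^ 2 * log s ^ 2) :=
        posLog_le_posLog (mul_nonneg (inv_nonneg.2 hρ.le) hds₀) hds'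
    _ ≤ 2 * log⁺ t + 2 * log⁺ (log s) := by
        have := posLog_mul (x := t ^ 2) (y := log s ^ 2)
        rwa [posLog_pow, posLog_pow, Nat.cast_ofNat] at this
    _ ≤ (2 * k + 4) * (log⁺ t + log⁺ (log r) + 1) := by
        have := posLog_nonneg (x := t)
        have := posLog_nonneg (x := log r)
        nlinarith

theorem calculus_lemma_abstract_general (m : ℕ) (T : ℝ → ℝ)
    (hTmono : MonotoneOn T (Ici (1 : ℝ)))
    (r₀ : ℝ) (hr₀ : 1 ≤ r₀) (hT₀ : 1 < T r₀)
    (hSmono : MonotoneOn (fun r : ℝ => r ^ (2 * m - 1) * deriv T r) (Ici (1 : ℝ)))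
    (r₁ : ℝ) (hr₁ : 1 ≤ r₁) (hS₁ : 1 < r₁ ^ (2 * m - 1) * deriv T r₁) :
    ∃ C > (0 : ℝ), ∃ E : Set ℝ, E ⊆ Ici (1 : ℝ) ∧ MeasurableSet E ∧ volume E < ⊤ ∧
      ∀ r ∈ Ici (1 : ℝ) \ E,
        max 0 (Real.log
            ((r ^ (2 * m - 1))⁻¹ * deriv (fun r : ℝ => r ^ (2 * m - 1) * deriv T r) r))
          ≤ C * (max 0 (Real.log (T r)) + max 0 (Real.log (Real.log r)) + 1) := by
  set k := 2 * m - 1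
  set S : ℝ → ℝ := fun r => r ^ k * deriv T r
  set a := max (max r₀ r₁) (exp 1)
  have ha : 1 ≤ a := one_le_exp zero_le_one |>.trans (le_max_right _ _)
  have har₀ : r₀ ≤ a := le_max_of_le_left (le_max_left _ _)
  have har₁ : r₁ ≤ a := le_max_of_le_left (le_max_right _ _)
  have hT : ∀ x ∈ Ici a, 1 < T x := fun x hx =>
    hT₀.trans_le (hTmono hr₀ (ha.trans hx) (har₀.trans hx))
  have hS : ∀ x ∈ Ici a, 1 < S x := fun x hx =>
    hS₁.trans_le (hSmono hr₁ (ha.trans hx) (har₁.trans hx))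
  have hlogS : MonotoneOn (fun x => log (S x)) (Ici a) := fun x hx y hy hxy =>
    log_le_log (one_pos.trans (hS x hx)) (hSmono (ha.trans hx) (ha.trans hy) hxy)
  refine ⟨2 * k + 4, by positivity,
    Icc 1 a ∪ ({x | 1 ≤ deriv (fun y => -(T y)⁻¹) x} ∩ Ioi a) ∪
      ({x | 1 ≤ deriv (fun y => -(log (S y))⁻¹) x} ∩ Ioi a), ?_, by measurability, ?_, ?_⟩
  · refine union_subset (union_subset Icc_subset_Ici_self ?_) ?_ <;>
      exact inter_subset_right.trans (Ioi_subset_Ici ha)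
  · exact measure_union_lt_top (measure_union_lt_top measure_Icc_lt_top
      ((hTmono.mono (Ici_subset_Ici.2 ha)).volume_setOf_one_le_deriv_neg_inv_lt_top
        fun x hx => one_pos.trans (hT x hx)))
      (hlogS.volume_setOf_one_le_deriv_neg_inv_lt_top fun x hx => log_pos (hS x hx))
  · rintro r ⟨hr1, hrE⟩
    have har : a < r := not_le.1 fun h => hrE (.inl (.inl ⟨hr1, h⟩))
    have hTr : deriv (fun y => -(T y)⁻¹) r < 1 := not_le.1 fun h => hrE (.inl (.inr ⟨h, har⟩))
    have hSr : deriv (fun y => -(log (S y))⁻¹) r < 1 := not_le.1 fun h => hrE (.inr ⟨h, har⟩)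
    exact posLog_inv_pow_mul_le ((le_max_right _ _).trans har.le) (hT r har.le).le
      (deriv_le_sq_of_deriv_neg_inv_lt_one (one_pos.trans (hT r har.le)) hTr) (hS r har.le)
      (hSmono.deriv_nonneg (Ici_mem_nhds (ha.trans_lt har)))
      (deriv_le_mul_log_sq_of_deriv_neg_inv_log_lt_one (hS r har.le) hSr)

/-- Let `m ≥ 1` and `T : [1,∞) → ℝ` be nondecreasing and differentiable with `T r₀ > 1` for
some `r₀ ≥ 1`.  If `S(r) := r^{2m-1} T'(r)` is nondecreasing and differentiable on `[1,∞)`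
with `S r₁ > 1` for some `r₁ ≥ 1`, then there are `C > 0` and a measurable `E ⊆ [1,∞)` of
finite Lebesgue measure such that `log⁺(r^{-(2m-1)} S'(r)) ≤ C (log⁺ T(r) + log⁺ log r + 1)`
for all `r ∈ [1,∞) \ E`. -/
theorem calculus_lemma_abstract (m : ℕ) (hm : 1 ≤ m) (T : ℝ → ℝ)
    (hTmono : MonotoneOn T (Ici (1 : ℝ)))
    (hTdiff : ∀ r ∈ Ici (1 : ℝ), DifferentiableAt ℝ T r)
    (r₀ : ℝ) (hr₀ : 1 ≤ r₀) (hT₀ : 1 < T r₀)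
    (hSmono : MonotoneOn (fun r : ℝ => r ^ (2 * m - 1) * deriv T r) (Ici (1 : ℝ)))
    (hSdiff : ∀ r ∈ Ici (1 : ℝ),
      DifferentiableAt ℝ (fun r : ℝ => r ^ (2 * m - 1) * deriv T r) r)
    (r₁ : ℝ) (hr₁ : 1 ≤ r₁) (hS₁ : 1 < r₁ ^ (2 * m - 1) * deriv T r₁) :
    ∃ C > (0 : ℝ), ∃ E : Set ℝ, E ⊆ Ici (1 : ℝ) ∧ MeasurableSet E ∧ volume E < ⊤ ∧
      ∀ r ∈ Ici (1 : ℝ) \ E,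
        max 0 (Real.log
            ((r ^ (2 * m - 1))⁻¹ * deriv (fun r : ℝ => r ^ (2 * m - 1) * deriv T r) r))
          ≤ C * (max 0 (Real.log (T r)) + max 0 (Real.log (Real.log r)) + 1) :=
  calculus_lemma_abstract_general m T hTmono r₀ hr₀ hT₀ hSmono r₁ hr₁ hS₁
end
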